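/- arXiv:math/0508211 — 2 statements merged into one kernel-verified Lean document; each statement's English description precedes it below -/
import Mathlib

section
/- Let $k$ be a field, let $S = k[X_1,\ldots,X_e]/\mathfrak{a}$ be a reduced equidimensional affine $k$-algebra with $\mathfrak{a} = (h_1,\ldots,h_t)$ of height $c$, and let $K = (f_1,\ldots,f_g)$ be an ideal generated by a regular sequence of length $g$. Form the extended Rees algebra $B = S[Kt, t^{-1}] \subset S[t,t^{-1}]$, presented by the surjection $\varphi: k[X_1,\ldots,X_e,T_1,\ldots,T_g,U] \to B$ sending $X_i \mapsto x_i$, $T_j \mapsto f_j t$, $U \mapsto t^{-1}$. Then the ideal of $(c+g) \times (c+g)$ minors of the Jacobian matrix of the elements $\{h_i, T_jU - f_j\}$ contains $I_c\left(\left(\frac{\partial h_i}{\partial X_j}\right)\right) U^{g-1} (T_1,\ldots,T_g)$. -/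
set_option synthInstance.maxHeartbeats 1000000
set_option maxHeartbeats 1000000

open Polynomial IsLocalRing

noncomputable section

/-- The length of a module, as the Krull dimension of its submodule lattice. -/
def modLength (R M : Type*) [CommRing R] [AddCommGroup M] [Module R M] : WithBot ℕ∞ :=
  Order.krullDim (Submodule R M)

/-- The integral closure of an ideal: all `z` satisfying an equation
`z^n + a_1 z^{n-1} + ... + a_n = 0` with `a_i ∈ I^i`. -/
def idealIC {R : Type*} [CommRing R] (I : Ideal R) : Set R :=
  {z | ∃ n : ℕ, 0 < n ∧ ∃ a : ℕ → R, (∀ i, a i ∈ I ^ i) ∧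
    z ^ n + ∑ i ∈ Finset.range n, a (i + 1) * z ^ (n - (i + 1)) = 0}

/-- `J` is a reduction of `I`. -/
def IsReduction {R : Type*} [CommRing R] (J I : Ideal R) : Prop :=
  J ≤ I ∧ idealIC J = idealIC I

/-- `b` is the Briançon–Skoda number of `I`. -/
def IsBSNum {R : Type*} [CommRing R] (I : Ideal R) (b : ℕ) : Prop :=
  (∀ (n : ℕ) (J : Ideal R), IsReduction J I → idealIC (I ^ (n + b)) ⊆ ↑(J ^ n)) ∧
  ∀ b' : ℕ, (∀ (n : ℕ) (J : Ideal R), IsReduction J I → idealIC (I ^ (n + b')) ⊆ ↑(J ^ n)) →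
    b ≤ b'

/-- `f` is a regular sequence on `R`. -/
def IsRegSeq {R : Type*} [CommRing R] {n : ℕ} (f : Fin n → R) : Prop :=
  ∀ (i : Fin n) (x : R), f i * x ∈ Ideal.span (f '' {j | j < i}) →
    x ∈ Ideal.span (f '' {j | j < i})

/-- A local ring is Cohen–Macaulay if it has a regular sequence of length its dimension
consisting of elements of the maximal ideal. -/
def IsCMLocalRing (R : Type*) [CommRing R] [IsLocalRing R] : Prop :=
  ∃ n : ℕ, (n : WithBot ℕ∞) = ringKrullDim R ∧
    ∃ f : Fin n → R, (∀ i, f i ∈ maximalIdeal R) ∧ IsRegSeq f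

/-- Serre's condition `S_2`: for every prime, the local ring has depth at least
`min(2, dim)`, expressed via existence of regular sequences. -/
def SerreS2 (A : Type*) [CommRing A] : Prop :=
  ∀ (q : PrimeSpectrum A) (n : ℕ),
    (n : WithBot ℕ∞) ≤ min 2 (ringKrullDim (Localization.AtPrime q.asIdeal)) →
      ∃ f : Fin n → Localization.AtPrime q.asIdeal,
        (∀ i, f i ∈ maximalIdeal (Localization.AtPrime q.asIdeal)) ∧ IsRegSeq f

/-- A local ring is analytically unramified if its completion is reduced. -/
def AnalyticallyUnramified (R : Type*) [CommRing R] [IsLocalRing R] : Prop :=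
  IsReduced (AdicCompletion (maximalIdeal R) R)

/-- The degree `n` component of a subalgebra of `R[X]`. -/
def algComp {R : Type*} [CommRing R] (A : Subalgebra R R[X]) (n : ℕ) : Ideal R where
  carrier := {r | C r * X ^ n ∈ A}
  add_mem' := fun {a b} ha hb => by
    simpa [C_add, add_mul] using A.add_mem ha hb
  zero_mem' := by simpa using A.zero_mem
  smul_mem' := fun c x hx => by
    have h := A.mul_mem (A.algebraMap_mem c) hx
    rw [Polynomial.algebraMap_eq] at h
    simpa [smul_eq_mul, map_mul, mul_assoc] using h

/-- A subalgebra of `R[X]` is graded if it contains all homogeneous components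
of its elements. -/
def IsGradedSubalg {R : Type*} [CommRing R] (A : Subalgebra R R[X]) : Prop :=
  ∀ p ∈ A, ∀ n : ℕ, Polynomial.C (p.coeff n) * X ^ n ∈ A

/-- The annihilator of `B/A` as an ideal of the Rees algebra. -/
def annBA {R : Type*} [CommRing R] (I : Ideal R) (A B : Subalgebra R R[X])
    (hIA : reesAlgebra I ≤ A) : Ideal ↥(reesAlgebra I) where
  carrier := {s | ∀ b ∈ B, (s : R[X]) * b ∈ A}
  add_mem' := fun {s t} hs ht b hb => by
    have h : ((s + t : ↥(reesAlgebra I)) : R[X]) * b = (s : R[X]) * b + (t : R[X]) * b := by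
      push_cast; ring
    rw [h]; exact A.add_mem (hs b hb) (ht b hb)
  zero_mem' := fun b hb => by simpa using A.zero_mem
  smul_mem' := fun c s hs b hb => by
    rw [smul_eq_mul]
    push_cast
    rw [mul_assoc]
    exact A.mul_mem (hIA c.2) (hs b hb)

/-- The filtration `{F n}` has Hilbert–Samuel polynomial with coefficients `e0, e1`
(and some lower order terms) in dimension `d`. -/
def HasHilbFil {R : Type*} [CommRing R] (F : ℕ → Ideal R) (d : ℕ) (e0 e1 : ℤ) : Prop :=
  ∃ (c : Fin (d - 1) → ℤ) (N : ℕ), ∀ n ≥ N, ∃ L : ℕ,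
    modLength R (R ⧸ F n) = ((L : ℕ∞) : WithBot ℕ∞) ∧
    (L : ℤ) = e0 * ((n + d - 1).choose d : ℤ) - e1 * ((n + d - 2).choose (d - 1) : ℤ) +
      ∑ i : Fin (d - 1), c i * (n : ℤ) ^ (i : ℕ)

/-- Hilbert coefficients of an ideal in a ring, with the dimension of the ring. -/
def HasHilb (A : Type*) [CommRing A] (q : Ideal A) (e0 e1 : ℤ) : Prop :=
  ∃ d : ℕ, (d : WithBot ℕ∞) = ringKrullDim A ∧ HasHilbFil (fun n => q ^ n) d e0 e1

/-- `e` is the Hilbert–Samuel multiplicity of the ideal `q` of `A`. -/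
def IsMultOf (A : Type*) [CommRing A] (q : Ideal A) (e : ℤ) : Prop :=
  ∃ d : ℕ, (d : WithBot ℕ∞) = ringKrullDim A ∧ ∃ (c : Fin d → ℤ) (N : ℕ), ∀ n ≥ N, ∃ L : ℕ,
    modLength A (A ⧸ q ^ n) = ((L : ℕ∞) : WithBot ℕ∞) ∧
    (L : ℤ) = e * ((n + d - 1).choose d : ℤ) + ∑ i : Fin d, c i * (n : ℤ) ^ (i : ℕ)

/-- The height of an ideal. -/
def idealHeight {R : Type*} [CommRing R] (I : Ideal R) : ℕ∞ :=
  ⨅ (p : PrimeSpectrum R) (_ : I ≤ p.asIdeal), Order.height p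

/-- An ideal is equimultiple of height `g` if it has height `g` and a reduction
generated by `g` elements. -/
def IsEquimultiple {R : Type*} [CommRing R] (I : Ideal R) (g : ℕ) : Prop :=
  idealHeight I = (g : ℕ∞) ∧
    ∃ J : Ideal R, IsReduction J I ∧ ∃ f : Fin g → R, J = Ideal.span (Set.range f)

/-- The minimal primes of `I` of maximal dimension. -/
def minlPrimesMaxDim {R : Type*} [CommRing R] (I : Ideal R) : Set (PrimeSpectrum R) :=
  {p | p.asIdeal ∈ I.minimalPrimes ∧ ringKrullDim (R ⧸ p.asIdeal) = ringKrullDim (R ⧸ I)}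

/-- `E0(I)` and `E1(I)`: multiplicity-weighted sums of local Hilbert coefficients. -/
def HasE01 {R : Type*} [CommRing R] [IsLocalRing R] (I : Ideal R) (E0 E1 : ℤ) : Prop :=
  ∃ s : Finset (PrimeSpectrum R), (↑s = minlPrimesMaxDim I) ∧
    ∃ e0 e1 dg : PrimeSpectrum R → ℤ,
      (∀ p ∈ s,
        HasHilb (Localization.AtPrime p.asIdeal)
          (Ideal.map (algebraMap R (Localization.AtPrime p.asIdeal)) I) (e0 p) (e1 p) ∧
        IsMultOf (R ⧸ p.asIdeal)
          (Ideal.map (Ideal.Quotient.mk p.asIdeal) (maximalIdeal R)) (dg p)) ∧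
      E0 = ∑ p ∈ s, e0 p * dg p ∧ E1 = ∑ p ∈ s, e1 p * dg p


open MvPolynomial in
/-- The ideal of `r × r` minors of a matrix. -/
def minorsIdeal {R : Type*} [CommRing R] {m n : Type*} (r : ℕ) (M : Matrix m n R) : Ideal R :=
  Ideal.span {x | ∃ (ri : Fin r → m) (ci : Fin r → n),
    x = Matrix.det (Matrix.of fun i j => M (ri i) (ci j))}

/-!
Take a `c × c` minor `Δ` of `(∂h_i/∂X_j)`. Its rows together with all rows `T_jU - f_j`, and its
columns together with the columns `T_l` (`l ≠ m`) and `U`, cut out a block lower triangular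
`(c + g) × (c + g)` minor of the big Jacobian, because the `h_i` involve neither `T` nor `U`.
Its diagonal blocks are `Δ` and `diag(U, …, U)` with the `m`-th column replaced by
`(T_1, …, T_g)`, whose determinant is `U^{g-1} T_m`.
-/

open MvPolynomial

lemma MvPolynomial.pderiv_rename_of_notMem_range {σ τ R : Type*} [CommSemiring R]
    {f : σ → τ} {y : τ} (hy : y ∉ Set.range f) (p : MvPolynomial σ R) :
    pderiv y (rename f p) = 0 := by
  induction p using MvPolynomial.induction_on with
  | C a => simp
  | add p q hp hq => simp [hp, hq]
  | mul_X p x hp =>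
    have hne : f x ≠ y := fun hxy => hy ⟨x, hxy⟩
    simp [Derivation.leibniz, hp, pderiv_X_of_ne hne]

@[simp]
lemma MvPolynomial.pderiv_inr_rename_inl {σ τ R : Type*} [CommSemiring R] (v : τ)
    (p : MvPolynomial σ R) : pderiv (Sum.inr v) (rename Sum.inl p) = 0 :=
  pderiv_rename_of_notMem_range (by simp) p

theorem Matrix.det_updateCol_smul_one {R n : Type*} [CommRing R] [Fintype n] [DecidableEq n]
    (u : R) (j : n) (v : n → R) :
    (updateCol (u • (1 : Matrix n n R)) j v).det = u ^ (Fintype.card n - 1) * v j := by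
  rw [det_updateCol_smul_left, ← cramer_apply, cramer_one]
  rfl

section Minors

variable {R m n : Type*} [CommRing R]

theorem det_submatrix_mem_minorsIdeal {r : ℕ} (M : Matrix m n R) (ri : Fin r → m)
    (ci : Fin r → n) : (M.submatrix ri ci).det ∈ minorsIdeal r M :=
  Ideal.subset_span ⟨ri, ci, rfl⟩

theorem det_mul_det_mem_minorsIdeal_of_blockTriangular {a b : ℕ} (M : Matrix m n R)
    (r₁ : Fin a → m) (r₂ : Fin b → m) (c₁ : Fin a → n) (c₂ : Fin b → n)
    (h0 : ∀ i j, M (r₁ i) (c₂ j) = 0) :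
    (M.submatrix r₁ c₁).det * (M.submatrix r₂ c₂).det ∈ minorsIdeal (a + b) M := by
  have hblocks : M.submatrix (Sum.elim r₁ r₂) (Sum.elim c₁ c₂) =
      Matrix.fromBlocks (M.submatrix r₁ c₁) 0 (M.submatrix r₂ c₁) (M.submatrix r₂ c₂) := by
    ext (i | i) (j | j) <;> simp [h0]
  have hminor := det_submatrix_mem_minorsIdeal M
    (Sum.elim r₁ r₂ ∘ finSumFinEquiv.symm) (Sum.elim c₁ c₂ ∘ finSumFinEquiv.symm)
  rwa [← Matrix.submatrix_submatrix, hblocks, Matrix.det_submatrix_equiv_self,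
    Matrix.det_fromBlocks_zero₁₂] at hminor

end Minors

section Jacobian

variable {R σ ι : Type*} [CommRing R] {g : ℕ}

def jacobian (F : ι → MvPolynomial σ R) : Matrix ι σ (MvPolynomial σ R) :=
  Matrix.of fun i v => pderiv v (F i)

/-- The presentation of the extended Rees algebra `S[Kt, t⁻¹]`: the variables are
`X_x = X (inl x)`, `T_j = X (inr (inl j))` and `U = X (inr (inr ()))`. -/
def reesEquations (h : ι → MvPolynomial σ R) (fp : Fin g → MvPolynomial σ R) :
    ι ⊕ Fin g → MvPolynomial (σ ⊕ Fin g ⊕ Unit) R :=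
  Sum.elim (fun i => rename Sum.inl (h i))
    (fun j => X (Sum.inr (Sum.inl j)) * X (Sum.inr (Sum.inr ())) - rename Sum.inl (fp j))

variable (h : ι → MvPolynomial σ R) (fp : Fin g → MvPolynomial σ R)

theorem jacobian_reesEquations_inl_inl (i : ι) (x : σ) :
    jacobian (reesEquations h fp) (Sum.inl i) (Sum.inl x) = rename Sum.inl (pderiv x (h i)) :=
  pderiv_rename Sum.inl_injective _ _

theorem jacobian_reesEquations_inl_inr (i : ι) (v : Fin g ⊕ Unit) :
    jacobian (reesEquations h fp) (Sum.inl i) (Sum.inr v) = 0 :=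
  pderiv_inr_rename_inl _ _

theorem jacobian_reesEquations_inr_T (j l : Fin g) :
    jacobian (reesEquations h fp) (Sum.inr j) (Sum.inr (Sum.inl l)) =
      if j = l then X (Sum.inr (Sum.inr ())) else 0 := by
  by_cases hjl : j = l <;>
    simp [jacobian, reesEquations, Derivation.leibniz, hjl]

theorem jacobian_reesEquations_inr_U (j : Fin g) :
    jacobian (reesEquations h fp) (Sum.inr j) (Sum.inr (Sum.inr ())) =
      X (Sum.inr (Sum.inl j)) := by
  simp [jacobian, reesEquations, Derivation.leibniz]

theorem jacobian_reesEquations_submatrix_inl_inl :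
    (jacobian (reesEquations h fp)).submatrix Sum.inl Sum.inl =
      (jacobian h).map (rename Sum.inl) :=
  Matrix.ext (jacobian_reesEquations_inl_inl h fp)

/-- The `T`-columns, with `U` in place of `T_m`. -/
def tuColumns (m l : Fin g) : σ ⊕ Fin g ⊕ Unit :=
  Sum.inr (if l = m then Sum.inr () else Sum.inl l)

theorem jacobian_reesEquations_submatrix_tuColumns (m : Fin g) :
    (jacobian (reesEquations h fp)).submatrix Sum.inr (tuColumns m) =
      Matrix.updateCol ((X (Sum.inr (Sum.inr ())) : MvPolynomial (σ ⊕ Fin g ⊕ Unit) R) • 1) m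
        fun j => X (Sum.inr (Sum.inl j)) := by
  refine Matrix.ext fun j l => ?_
  by_cases hl : l = m
  · subst hl
    simp [tuColumns, jacobian_reesEquations_inr_U]
  · simp [tuColumns, hl, jacobian_reesEquations_inr_T, Matrix.one_apply]

theorem jacobian_minor_mul_mem_minorsIdeal_reesEquations {c : ℕ} (ri : Fin c → ι)
    (ci : Fin c → σ) (m : Fin g) :
    (((jacobian h).map (rename Sum.inl)).submatrix ri ci).det *
        X (Sum.inr (Sum.inr ())) ^ (g - 1) * X (Sum.inr (Sum.inl m)) ∈
      minorsIdeal (c + g) (jacobian (reesEquations h fp)) := by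
  have hmem := det_mul_det_mem_minorsIdeal_of_blockTriangular (jacobian (reesEquations h fp))
    (Sum.inl ∘ ri) Sum.inr (Sum.inl ∘ ci) (tuColumns m)
    (fun _ _ => jacobian_reesEquations_inl_inr h fp _ _)
  rwa [← Matrix.submatrix_submatrix, jacobian_reesEquations_submatrix_inl_inl,
    jacobian_reesEquations_submatrix_tuColumns, Matrix.det_updateCol_smul_one,
    Fintype.card_fin, ← mul_assoc] at hmem

end Jacobian

open MvPolynomial in
theorem jacobian_minors_containment_general
    (k : Type*) [Field k] (e tnum g c : ℕ)
    (h : Fin tnum → MvPolynomial (Fin e) k)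
    (fp : Fin g → MvPolynomial (Fin e) k) :
    minorsIdeal c
        (Matrix.of fun (i : Fin tnum) (j : Fin e) =>
          (rename (Sum.inl : Fin e → Fin e ⊕ Fin g ⊕ Unit)) (pderiv j (h i))) *
      Ideal.span {(X (Sum.inr (Sum.inr ())) : MvPolynomial (Fin e ⊕ Fin g ⊕ Unit) k) ^ (g - 1)} *
      Ideal.span (Set.range fun j : Fin g =>
        (X (Sum.inr (Sum.inl j)) : MvPolynomial (Fin e ⊕ Fin g ⊕ Unit) k)) ≤
    minorsIdeal (c + g)
      (Matrix.of fun (i : Fin tnum ⊕ Fin g) (v : Fin e ⊕ Fin g ⊕ Unit) =>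
        pderiv v (Sum.elim (fun i => rename (Sum.inl : Fin e → Fin e ⊕ Fin g ⊕ Unit) (h i))
          (fun j => X (Sum.inr (Sum.inl j)) * X (Sum.inr (Sum.inr ())) -
            rename (Sum.inl : Fin e → Fin e ⊕ Fin g ⊕ Unit) (fp j)) i)) := by
  rw [minorsIdeal, Ideal.span_mul_span', Ideal.span_mul_span', Ideal.span_le]
  rintro _ ⟨_, ⟨_, ⟨ri, ci, rfl⟩, _, rfl, rfl⟩, _, ⟨m, rfl⟩, rfl⟩
  exact jacobian_minor_mul_mem_minorsIdeal_reesEquations h fp ri ci m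

open MvPolynomial in
theorem jacobian_minors_containment
    (k : Type*) [Field k] (e tnum g c : ℕ)
    (h : Fin tnum → MvPolynomial (Fin e) k)
    (a : Ideal (MvPolynomial (Fin e) k)) (ha : a = Ideal.span (Set.range h))
    (hht : idealHeight a = (c : ℕ∞))
    (hred : IsReduced (MvPolynomial (Fin e) k ⧸ a))
    (hequi : ∀ p ∈ minimalPrimes (MvPolynomial (Fin e) k ⧸ a),
      ringKrullDim ((MvPolynomial (Fin e) k ⧸ a) ⧸ p) =
        ringKrullDim (MvPolynomial (Fin e) k ⧸ a))
    (f : Fin g → MvPolynomial (Fin e) k ⧸ a)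
    (hfreg : IsRegSeq f)
    (fp : Fin g → MvPolynomial (Fin e) k)
    (hfp : ∀ j, Ideal.Quotient.mk a (fp j) = f j) :
    minorsIdeal c
        (Matrix.of fun (i : Fin tnum) (j : Fin e) =>
          (rename (Sum.inl : Fin e → Fin e ⊕ Fin g ⊕ Unit)) (pderiv j (h i))) *
      Ideal.span {(X (Sum.inr (Sum.inr ())) : MvPolynomial (Fin e ⊕ Fin g ⊕ Unit) k) ^ (g - 1)} *
      Ideal.span (Set.range fun j : Fin g =>
        (X (Sum.inr (Sum.inl j)) : MvPolynomial (Fin e ⊕ Fin g ⊕ Unit) k)) ≤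
    minorsIdeal (c + g)
      (Matrix.of fun (i : Fin tnum ⊕ Fin g) (v : Fin e ⊕ Fin g ⊕ Unit) =>
        pderiv v (Sum.elim (fun i => rename (Sum.inl : Fin e → Fin e ⊕ Fin g ⊕ Unit) (h i))
          (fun j => X (Sum.inr (Sum.inl j)) * X (Sum.inr (Sum.inr ())) -
            rename (Sum.inl : Fin e → Fin e ⊕ Fin g ⊕ Unit) (fp j)) i)) :=
  jacobian_minors_containment_general k e tnum g c h fp

end
end

section
/- Let $(S, \mathfrak{n})$ be a one-dimensional analytically unramified local Cohen–Macaulay ring with finite integral closure $\overline{S}$, let $f \in S$ be a non zerodivisor with $fS$ being $\mathfrak{n}$-primary, and suppose $\overline{f^nS} = f^n \overline{S} \cap S$ for all $n \gg 0$. Let $b$ be the Briançon–Skoda number of the ideal $fS$, i.e., the least $b \geq 0$ with $\overline{f^{n+b}S} \subset f^n S$ for all $n$. Then $f^b \overline{S} \subset S :_S \overline{S}$, and $b$ is the least nonnegative integer $c$ with $f^c\overline{S} \subset S$. -/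
set_option synthInstance.maxHeartbeats 1000000
set_option maxHeartbeats 1000000

open Polynomial IsLocalRing

noncomputable section

/-- The conductor `S :_S S̄` of the integral closure of `S` in its total ring of fractions. -/
def conductorIdeal (S : Type*) [CommRing S] : Ideal S where
  carrier := {x | ∀ y : ↥(integralClosure S (FractionRing S)),
    x • y ∈ LinearMap.range (Algebra.linearMap S ↥(integralClosure S (FractionRing S)))}
  add_mem' := fun {a b} ha hb y => by
    rw [add_smul]
    exact Submodule.add_mem _ (ha y) (hb y)
  zero_mem' := fun y => by
    rw [zero_smul]
    exact Submodule.zero_mem _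
  smul_mem' := fun c x hx y => by
    rw [smul_eq_mul, mul_smul]
    exact Submodule.smul_mem _ c (hx y)


/-!
If `x` is integral over the ideal `gS`, `g` a nonzerodivisor, dividing an equation of integral
dependence by powers of `g` shows that `x / g` is integral over `S`; thus
`\overline{f^n S} ⊆ f^n S̄ ∩ S` for every `n`. As `S` is local, every reduction `J` of `fS`
contains `f`. Hence `f^c S̄ ⊆ S` gives `\overline{f^(n+c) S} ⊆ f^n S ⊆ J^n`, i.e. `b ≤ c`.

Conversely, `S̄` is finite, so some nonzerodivisor `d` has `d S̄ ⊆ S`. In dimension one `dS` is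
primary to the maximal ideal, so `f^k S̄ ⊆ S` for some `k`. For `y ∈ S̄` and `n ≫ 0` the element
`x = f^(n+b) (f^k y) ∈ f^(n+k+b) S̄ ∩ S = \overline{f^(n+k+b) S} ⊆ f^(n+k) S`, and cancelling
`f^(n+k)` gives `f^b y ∈ S`. Since `f^b S̄` is an `S̄`-module contained in `S`, it lies in the
conductor.
-/

open scoped nonZeroDivisors

theorem subset_idealIC {R : Type*} [CommRing R] (I : Ideal R) : (I : Set R) ⊆ idealIC I := by
  intro z hz
  refine ⟨1, one_pos, fun i => if i = 1 then -z else 0, fun i => ?_, by simp⟩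
  dsimp only
  split_ifs with h
  · simpa [h] using hz
  · exact zero_mem _

/- Write the equation of integral dependence of `f` over `J ⊆ fS` as `f^n (1 + ∑ u_i) = 0` with
`a_i = u_i f^i`. Some `u_(j+1)` is a unit, and `a_(j+1) ∈ J^(j+1) ⊆ f^j J` forces `u_(j+1) f ∈ J`. -/
theorem mem_of_isReduction_span_singleton {R : Type*} [CommRing R] [IsLocalRing R] {f : R}
    (hf : f ∈ R⁰) {J : Ideal R} (hJ : IsReduction J (Ideal.span {f})) : f ∈ J := by
  obtain ⟨n, -, a, ha, hsum⟩ : f ∈ idealIC J :=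
    hJ.2 ▸ subset_idealIC _ (Ideal.mem_span_singleton_self f)
  have hJpow (i : ℕ) : J ^ i ≤ Ideal.span {f ^ i} :=
    Ideal.span_singleton_pow f i ▸ Ideal.pow_right_mono hJ.1 i
  choose u hu using fun i => Ideal.mem_span_singleton'.1 (hJpow i (ha i))
  have hu_sum : ∑ i ∈ Finset.range n, u (i + 1) = -1 := by
    have : f ^ n * (1 + ∑ i ∈ Finset.range n, u (i + 1)) = f ^ n * 0 := by
      rw [mul_zero, ← hsum, mul_add, mul_one, Finset.mul_sum]
      refine congrArg _ (Finset.sum_congr rfl fun i hi => ?_)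
      rw [← hu, ← pow_mul_pow_sub f (show i + 1 ≤ n from Finset.mem_range.1 hi)]
      ring
    exact eq_neg_of_add_eq_zero_right
      ((mul_cancel_left_mem_nonZeroDivisors (pow_mem hf n)).1 this)
  obtain ⟨j, -, hj⟩ := IsLocalRing.exists_of_isUnit_sum (hu_sum ▸ isUnit_one.neg)
  have haj : a (j + 1) ∈ Ideal.span {f ^ j} * J :=
    (pow_succ J j ▸ Ideal.mul_mono_left (hJpow j)) (ha (j + 1))
  obtain ⟨w, hwJ, hw⟩ := Ideal.mem_span_singleton_mul.1 haj
  have hw' : w = u (j + 1) * f :=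
    (mul_cancel_left_mem_nonZeroDivisors (pow_mem hf j)).1 (by rw [hw, ← hu, pow_succ]; ring)
  exact (Ideal.unit_mul_mem_iff_mem J hj).1 (hw' ▸ hwJ)

theorem isIntegral_of_pow_add_sum_eq_zero {R A : Type*} [CommRing R] [CommRing A] [Algebra R A]
    {z : A} {n : ℕ} (c : ℕ → R)
    (h : z ^ n + ∑ i ∈ Finset.range n, algebraMap R A (c (i + 1)) * z ^ (n - (i + 1)) = 0) :
    IsIntegral R z := by
  refine ⟨X ^ n + ∑ i ∈ Finset.range n, C (c (i + 1)) * X ^ (n - (i + 1)),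
    monic_X_pow_add ?_, by simpa [eval₂_finsetSum] using h⟩
  refine (degree_sum_le _ _).trans_lt <|
    (Finset.sup_lt_iff (WithBot.bot_lt_coe n)).2 fun i hi => ?_
  refine (degree_C_mul_X_pow_le _ _).trans_lt ?_
  exact Nat.cast_lt.2 (Nat.sub_lt_self i.succ_pos (Finset.mem_range.1 hi))

theorem IsLocalRing.maximalIdeal_le_radical_span_singleton {R : Type*} [CommRing R]
    [IsLocalRing R] [Ring.KrullDimLE 1 R] {d : R} (hd : d ∈ R⁰) :
    maximalIdeal R ≤ (Ideal.span {d}).radical := by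
  rw [Ideal.radical_eq_sInf]
  refine le_sInf fun p ⟨hdp, hp⟩ => ?_
  rcases Ring.krullDimLE_one_iff.1 ‹_› p hp with hmin | hmax
  · exact absurd hd (notMem_nonZeroDivisors_of_mem_mem_minimalPrimes
      (hdp (Ideal.mem_span_singleton_self d)) hmin)
  · exact (IsLocalRing.eq_maximalIdeal hmax).ge

section FractionRing

variable {S K : Type*} [CommRing S] [CommRing K] [Algebra S K] [IsFractionRing S K]

theorem exists_smul_eq_algebraMap_of_mem_idealIC {g x : S} (hg : g ∈ S⁰)
    (hx : x ∈ idealIC (Ideal.span {g})) :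
    ∃ y : integralClosure S K, g • y = algebraMap S _ x := by
  obtain ⟨n, -, a, ha, hsum⟩ := hx
  choose s hs using fun i => Ideal.mem_span_singleton'.1 (Ideal.span_singleton_pow g i ▸ ha i)
  set w := IsLocalization.mk' K x (⟨g, hg⟩ : S⁰)
  have hw : algebraMap S K g * w = algebraMap S K x := IsLocalization.mk'_spec' K x ⟨g, hg⟩
  have hint : IsIntegral S w := by
    refine isIntegral_of_pow_add_sum_eq_zero (n := n) s ?_
    have key : algebraMap S K g ^ n *
        (w ^ n + ∑ i ∈ Finset.range n, algebraMap S K (s (i + 1)) * w ^ (n - (i + 1))) =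
        algebraMap S K (x ^ n + ∑ i ∈ Finset.range n, a (i + 1) * x ^ (n - (i + 1))) := by
      simp only [mul_add, Finset.mul_sum, map_add, map_sum, map_mul, map_pow, ← hw, ← hs]
      congr 1
      · ring
      · refine Finset.sum_congr rfl fun i hi => ?_
        rw [← pow_mul_pow_sub _ (show i + 1 ≤ n from Finset.mem_range.1 hi)]
        ring
    have hgn : IsUnit (algebraMap S K g ^ n) := (IsLocalization.map_units K ⟨g, hg⟩).pow n
    rwa [hsum, map_zero, hgn.mul_right_eq_zero] at key
  exact ⟨⟨w, hint⟩, Subtype.ext (by simpa [Algebra.smul_def] using hw)⟩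

theorem Subalgebra.algebraMap_injective_of_isFractionRing (A : Subalgebra S K) :
    Function.Injective (algebraMap S A) :=
  fun _ _ h => IsFractionRing.injective S K (congrArg Subtype.val h)

theorem Subalgebra.smul_right_injective_of_mem_nonZeroDivisors (A : Subalgebra S K) {a : S}
    (ha : a ∈ S⁰) : Function.Injective (a • · : A → A) := fun y z h => by
  have h' := congrArg Subtype.val h
  simp only [Algebra.smul_def] at h'
  exact Subtype.ext ((IsLocalization.map_units K (⟨a, ha⟩ : S⁰)).mul_left_cancel h')

theorem exists_nonZeroDivisor_smul_mem_range (A : Subalgebra S K) (hA : Module.Finite S A) :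
    ∃ d ∈ S⁰, ∀ y : A, d • y ∈ LinearMap.range (Algebra.linearMap S A) := by
  obtain ⟨d, hd, hint⟩ := FractionalIdeal.isFractional_of_fg (S := S⁰)
    (Module.Finite.iff_fg.1 hA : (Subalgebra.toSubmodule A).FG)
  refine ⟨d, hd, fun y => ?_⟩
  obtain ⟨s, hs⟩ := hint y y.2
  exact ⟨s, Subtype.ext hs⟩

theorem exists_pow_smul_mem_range [IsLocalRing S] [Ring.KrullDimLE 1 S] (A : Subalgebra S K)
    (hA : Module.Finite S A) {f : S} (hf : f ∈ maximalIdeal S) :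
    ∃ k : ℕ, ∀ y : A, f ^ k • y ∈ LinearMap.range (Algebra.linearMap S A) := by
  obtain ⟨d, hd, hdA⟩ := exists_nonZeroDivisor_smul_mem_range A hA
  obtain ⟨k, hk⟩ := IsLocalRing.maximalIdeal_le_radical_span_singleton hd hf
  obtain ⟨e, he⟩ := Ideal.mem_span_singleton'.1 hk
  refine ⟨k, fun y => ?_⟩
  rw [← he, mul_smul]
  exact Submodule.smul_mem _ e (hdA y)

theorem idealIC_span_singleton_pow_add_subset [IsLocalRing S] {f : S} (hf : f ∈ S⁰) {c : ℕ}
    (hc : ∀ y : integralClosure S K, f ^ c • y ∈ LinearMap.range (Algebra.linearMap S _))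
    {J : Ideal S} (hJ : IsReduction J (Ideal.span {f})) (n : ℕ) :
    idealIC (Ideal.span {f} ^ (n + c)) ⊆ ↑(J ^ n) := by
  intro x hx
  rw [Ideal.span_singleton_pow] at hx
  obtain ⟨w, hw⟩ := exists_smul_eq_algebraMap_of_mem_idealIC (K := K) (pow_mem hf _) hx
  obtain ⟨s, hs⟩ := hc w
  rw [Algebra.linearMap_apply] at hs
  have hx : x = f ^ n * s := (integralClosure S K).algebraMap_injective_of_isFractionRing <| by
    rw [map_mul, ← Algebra.smul_def, hs, smul_smul, ← pow_add, hw]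
  rw [hx]
  exact Ideal.mul_mem_right _ _ (Ideal.pow_mem_pow (mem_of_isReduction_span_singleton hf hJ) n)

theorem pow_smul_mem_range_of_idealIC_pow_add_subset (A : Subalgebra S K) {f : S} (hf : f ∈ S⁰)
    {N k b : ℕ}
    (hic : ∀ n ≥ N, ∀ (x : S) (y : A), f ^ n • y = algebraMap S A x →
      x ∈ idealIC (Ideal.span {f} ^ n))
    (hk : ∀ y : A, f ^ k • y ∈ LinearMap.range (Algebra.linearMap S A))
    (hb : ∀ n, idealIC (Ideal.span {f} ^ (n + b)) ⊆ ↑(Ideal.span {f} ^ n)) (y : A) :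
    f ^ b • y ∈ LinearMap.range (Algebra.linearMap S A) := by
  obtain ⟨s, hs⟩ := hk y
  rw [Algebra.linearMap_apply] at hs
  have hx : f ^ (N + k + b) • y = algebraMap S A (f ^ (N + b) * s) := by
    rw [map_mul, ← Algebra.smul_def, hs, smul_smul, ← pow_add, Nat.add_right_comm]
  have hmem := hb (N + k) (hic _ (by omega) _ _ hx)
  rw [Ideal.span_singleton_pow, SetLike.mem_coe, Ideal.mem_span_singleton'] at hmem
  obtain ⟨t, ht⟩ := hmem
  refine ⟨t, A.smul_right_injective_of_mem_nonZeroDivisors (pow_mem hf (N + k)) ?_⟩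
  calc f ^ (N + k) • algebraMap S A t = algebraMap S A (t * f ^ (N + k)) := by
        rw [Algebra.smul_def, ← map_mul, mul_comm]
    _ = f ^ (N + k + b) • y := by rw [ht, hx]
    _ = f ^ (N + k) • f ^ b • y := by rw [smul_smul, ← pow_add]

end FractionRing

theorem mem_conductorIdeal_of_algebraMap_eq_smul {S : Type*} [CommRing S] {a s : S}
    (ha : ∀ y : integralClosure S (FractionRing S),
      a • y ∈ LinearMap.range (Algebra.linearMap S _))
    {y : integralClosure S (FractionRing S)} (hs : algebraMap S _ s = a • y) :
    s ∈ conductorIdeal S := fun z => by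
  rw [Algebra.smul_def, hs, smul_mul_assoc]
  exact ha (y * z)

theorem bs_number_eq_least_conductor_exponent_general
    (S : Type*) [CommRing S] [IsLocalRing S]
    (hdim : ringKrullDim S = (1 : WithBot ℕ∞))
    (hfin : Module.Finite S ↥(integralClosure S (FractionRing S)))
    (f : S) (hf : f ∈ nonZeroDivisors S)
    (hprim : (Ideal.span {f}).radical = maximalIdeal S)
    (hic : ∃ N : ℕ, ∀ n ≥ N, idealIC (Ideal.span {f} ^ n) =
      {x : S | ∃ y : ↥(integralClosure S (FractionRing S)),
        (y : FractionRing S) ∈ integralClosure S (FractionRing S) ∧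
        algebraMap S (FractionRing S) x = (algebraMap S (FractionRing S) f) ^ n * (y : FractionRing S)})
    (b : ℕ) (hb : IsBSNum (Ideal.span {f}) b) :
    (∀ y : ↥(integralClosure S (FractionRing S)), ∃ s : S,
      algebraMap S ↥(integralClosure S (FractionRing S)) s = f ^ b • y ∧ s ∈ conductorIdeal S) ∧
    (∀ y : ↥(integralClosure S (FractionRing S)), f ^ b • y ∈
      LinearMap.range (Algebra.linearMap S ↥(integralClosure S (FractionRing S)))) ∧
    (∀ c : ℕ, (∀ y : ↥(integralClosure S (FractionRing S)), f ^ c • y ∈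
      LinearMap.range (Algebra.linearMap S ↥(integralClosure S (FractionRing S)))) → b ≤ c) := by
  have : Ring.KrullDimLE 1 S := Ring.krullDimLE_iff.2 hdim.le
  have hfm : f ∈ maximalIdeal S := hprim ▸ Ideal.le_radical (Ideal.mem_span_singleton_self f)
  obtain ⟨k, hk⟩ := exists_pow_smul_mem_range _ hfin hfm
  obtain ⟨N, hN⟩ := hic
  have hfb := pow_smul_mem_range_of_idealIC_pow_add_subset _ hf
    (fun n hn x y hxy => hN n hn ▸
      ⟨y, y.2, by simpa [Algebra.smul_def] using (congrArg Subtype.val hxy).symm⟩)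
    hk (fun n => hb.1 n _ ⟨le_rfl, rfl⟩)
  refine ⟨fun y => ?_, hfb, fun c hc => hb.2 c fun n J hJ => ?_⟩
  · obtain ⟨s, hs⟩ := hfb y
    exact ⟨s, hs, mem_conductorIdeal_of_algebraMap_eq_smul hfb hs⟩
  · exact idealIC_span_singleton_pow_add_subset hf hc hJ n

theorem bs_number_eq_least_conductor_exponent
    (S : Type*) [CommRing S] [IsNoetherianRing S] [IsLocalRing S]
    (hdim : ringKrullDim S = (1 : WithBot ℕ∞)) (hCM : IsCMLocalRing S)
    (hAU : AnalyticallyUnramified S)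
    (hfin : Module.Finite S ↥(integralClosure S (FractionRing S)))
    (f : S) (hf : f ∈ nonZeroDivisors S)
    (hprim : (Ideal.span {f}).radical = maximalIdeal S)
    (hic : ∃ N : ℕ, ∀ n ≥ N, idealIC (Ideal.span {f} ^ n) =
      {x : S | ∃ y : ↥(integralClosure S (FractionRing S)),
        (y : FractionRing S) ∈ integralClosure S (FractionRing S) ∧
        algebraMap S (FractionRing S) x = (algebraMap S (FractionRing S) f) ^ n * (y : FractionRing S)})
    (b : ℕ) (hb : IsBSNum (Ideal.span {f}) b) :
    (∀ y : ↥(integralClosure S (FractionRing S)), ∃ s : S,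
      algebraMap S ↥(integralClosure S (FractionRing S)) s = f ^ b • y ∧ s ∈ conductorIdeal S) ∧
    (∀ y : ↥(integralClosure S (FractionRing S)), f ^ b • y ∈
      LinearMap.range (Algebra.linearMap S ↥(integralClosure S (FractionRing S)))) ∧
    (∀ c : ℕ, (∀ y : ↥(integralClosure S (FractionRing S)), f ^ c • y ∈
      LinearMap.range (Algebra.linearMap S ↥(integralClosure S (FractionRing S)))) → b ≤ c) :=
  bs_number_eq_least_conductor_exponent_general S hdim hfin f hf hprim hic b hb

end
end
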